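/- arXiv:2504.04290 — 2 statements merged into one kernel-verified Lean document; each statement's English description precedes it below -/
import Mathlib

section
/- If θ > N/2 and W is symmetric with entries in [0,1] and zero diagonal, then the potential function Φ_W is maximized over {0,1}^N at a = 𝟘, i.e., Φ_W(𝟘) ≥ Φ_W(a) for all a ∈ {0,1}^N. -/
/-! Since `Φ_W(a) - Φ_W(𝟘) = ½·aᵀWa - (θ/N)·𝟙ᵀWa`, it suffices that `aᵀWa ≤ 𝟙ᵀWa` and
`½ ≤ θ/N`. The first holds because `Wa ≥ 0` and `a ≤ 𝟙` entrywise; so the conclusion holds for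
every `a ∈ [0,1]^N`, not only for binary vectors. -/

open Matrix

section NonnegMatrix

variable {n : Type*} [Fintype n] {W : Matrix n n ℝ} {a : n → ℝ}

lemma mulVec_nonneg_of_nonneg (hW : ∀ i j, 0 ≤ W i j) (ha : 0 ≤ a) : 0 ≤ W *ᵥ a :=
  fun i => dotProduct_nonneg_of_nonneg (hW i) ha

lemma dotProduct_mulVec_le_one_dotProduct_mulVec (hW : ∀ i j, 0 ≤ W i j) (ha₀ : 0 ≤ a)
    (ha₁ : a ≤ 1) : a ⬝ᵥ W *ᵥ a ≤ (fun _ => (1 : ℝ)) ⬝ᵥ W *ᵥ a :=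
  dotProduct_le_dotProduct_of_nonneg_right ha₁ (mulVec_nonneg_of_nonneg hW ha₀)

end NonnegMatrix

theorem potential_maximized_at_zero_general (N : ℕ) (hN : 1 ≤ N) (θ : ℝ)
    (hθ : θ > N / 2)
    (W : Matrix (Fin N) (Fin N) ℝ)
    (hrange : ∀ i j, W i j ∈ Set.Icc (0:ℝ) 1)
    (Φ : (Fin N → ℝ) → ℝ)
    (hΦ : ∀ a, Φ a = (1/2) * (a ⬝ᵥ W.mulVec a)
        - (θ / N) * ((fun _ => (1:ℝ)) ⬝ᵥ W.mulVec a)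
        + (θ / (2 * N)) * ((fun _ => (1:ℝ)) ⬝ᵥ W.mulVec (fun _ => (1:ℝ)))) :
    ∀ a : Fin N → ℝ, (∀ j, a j = 0 ∨ a j = 1) →
      Φ a ≤ Φ (fun _ => (0:ℝ)) := by
  intro a ha
  have hW : ∀ i j, 0 ≤ W i j := fun i j => (hrange i j).1
  have ha₀ : 0 ≤ a := fun j => by rcases ha j with h | h <;> simp [h]
  have ha₁ : a ≤ 1 := fun j => by rcases ha j with h | h <;> simp [h]
  have hhalf : 1 / 2 ≤ θ / N := by
    rw [le_div_iff₀ (by exact_mod_cast hN)]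
    linarith
  have hQL := dotProduct_mulVec_le_one_dotProduct_mulVec hW ha₀ ha₁
  have hL := dotProduct_nonneg_of_nonneg (fun _ => zero_le_one) (mulVec_nonneg_of_nonneg hW ha₀)
  rw [hΦ, hΦ, ← Pi.zero_def]
  simp only [mulVec_zero, dotProduct_zero]
  linarith [mul_le_mul_of_nonneg_right hhalf hL]

theorem potential_maximized_at_zero (N : ℕ) (hN : 1 ≤ N) (θ : ℝ)
    (hθ : θ > N / 2)
    (W : Matrix (Fin N) (Fin N) ℝ) (hsym : W.IsSymm)
    (hrange : ∀ i j, W i j ∈ Set.Icc (0:ℝ) 1) (hdiag : ∀ i, W i i = 0)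
    (Φ : (Fin N → ℝ) → ℝ)
    (hΦ : ∀ a, Φ a = (1/2) * (a ⬝ᵥ W.mulVec a)
        - (θ / N) * ((fun _ => (1:ℝ)) ⬝ᵥ W.mulVec a)
        + (θ / (2 * N)) * ((fun _ => (1:ℝ)) ⬝ᵥ W.mulVec (fun _ => (1:ℝ)))) :
    ∀ a : Fin N → ℝ, (∀ j, a j = 0 ∨ a j = 1) →
      Φ a ≤ Φ (fun _ => (0:ℝ)) :=
  potential_maximized_at_zero_general N hN θ hθ W hrange Φ hΦ
end

section
/- If θ > N/2 and N ≥ 2, then for all sufficiently large β, F(1) = Σ_{d=0}^{N} C(N,d)·exp(β·A_d)·β·A_d + (ρ/2)·N(N-1) > 0; i.e., the sum Σ_{d=1}^{N} C(N,d)·exp(β·A_d)·β·A_d tends to 0 as β → ∞ since all A_d < 0 for d ≥ 1. -/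
/-! Since `A 0 = 0`, the `d = 0` term of the sum vanishes, and for `1 ≤ d ≤ N` the hypothesis
`θ > N / 2` gives `A d < 0`. Each remaining term is `C(N,d) · g(β · A d)` with `g t = eᵗ t`,
and `g t → 0` as `t → -∞`; so the sum tends to `0` and `F(1)` tends to `(ρ / 2) N (N - 1) > 0`. -/

open Filter Topology Real

lemma Real.tendsto_exp_mul_self_atBot : Tendsto (fun t : ℝ => exp t * t) atBot (𝓝 0) := by
  have h := ((tendsto_pow_mul_exp_neg_atTop_nhds_zero 1).comp tendsto_neg_atBot_atTop).neg
  rw [neg_zero] at h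
  exact h.congr fun t => by simp [mul_comm]

lemma Real.tendsto_exp_mul_mul_atTop_of_neg {a : ℝ} (ha : a < 0) :
    Tendsto (fun β : ℝ => exp (β * a) * (β * a)) atTop (𝓝 0) :=
  tendsto_exp_mul_self_atBot.comp (tendsto_id.atTop_mul_const_of_neg ha)

lemma Real.tendsto_sum_mul_exp_mul_mul_atTop {ι : Type*} (s : Finset ι) (c a : ι → ℝ)
    (ha : ∀ i ∈ s, a i < 0) :
    Tendsto (fun β : ℝ => ∑ i ∈ s, c i * exp (β * a i) * (β * a i)) atTop (𝓝 0) := by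
  have h := tendsto_finsetSum s fun i hi =>
    (tendsto_exp_mul_mul_atTop_of_neg (ha i hi)).const_mul (c i)
  simpa only [mul_zero, Finset.sum_const_zero, mul_assoc] using h

lemma sq_sub_self_div_two_lt_mul {d N θ : ℝ} (hd : 0 < d) (hdN : d ≤ N) (hN : 1 < N)
    (hθ : N / 2 < θ) : (d ^ 2 - d) / 2 < θ / N * (N - 1) * d := by
  have hθN : 1 / 2 < θ / N := by rw [lt_div_iff₀ (by linarith)]; linarith
  have hNd : 0 < (N - 1) * d := mul_pos (by linarith) hd
  calc (d ^ 2 - d) / 2 = 1 / 2 * (d - 1) * d := by ring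
    _ ≤ 1 / 2 * (N - 1) * d := by gcongr
    _ < θ / N * (N - 1) * d := by rw [mul_assoc, mul_assoc]; gcongr

lemma Finset.sum_range_succ_eq_sum_Icc_one {M : Type*} [AddCommMonoid M] (f : ℕ → M)
    (hf : f 0 = 0) (n : ℕ) : ∑ i ∈ range (n + 1), f i = ∑ i ∈ Icc 1 n, f i := by
  rw [sum_range_eq_add_Ico f (by omega : 0 < n + 1), hf, zero_add, Ico_add_one_right_eq_Icc]

theorem F_at_one_positive_for_large_beta (N : ℕ) (hN : 2 ≤ N) (θ : ℝ)
    (hθ : θ > N / 2) (ρ : ℝ) (hρ : 0 < ρ)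
    (A : ℕ → ℝ) (hA : ∀ d, A d = ((d:ℝ)^2 - d) / 2 - (θ / N) * (N - 1) * d) :
    (∃ β₀ : ℝ, ∀ β ≥ β₀,
      (∑ d ∈ Finset.range (N + 1),
          (N.choose d : ℝ) * Real.exp (β * A d) * (β * A d))
        + (ρ / 2) * N * (N - 1) > 0)
    ∧ Tendsto (fun β : ℝ => ∑ d ∈ Finset.Icc 1 N,
        (N.choose d : ℝ) * Real.exp (β * A d) * (β * A d)) atTop (nhds 0) := by
  have hN' : (1 : ℝ) < N := by exact_mod_cast hN
  have hA_neg : ∀ d ∈ Finset.Icc 1 N, A d < 0 := fun d hd => by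
    obtain ⟨hd1, hdN⟩ := Finset.mem_Icc.mp hd
    rw [hA, sub_neg]
    exact sq_sub_self_div_two_lt_mul (by exact_mod_cast hd1) (by exact_mod_cast hdN) hN' hθ
  have h_tail := tendsto_sum_mul_exp_mul_mul_atTop _ (fun d => (N.choose d : ℝ)) A hA_neg
  refine ⟨?_, h_tail⟩
  have h_F : Tendsto (fun β : ℝ => (∑ d ∈ Finset.range (N + 1),
      (N.choose d : ℝ) * exp (β * A d) * (β * A d)) + ρ / 2 * N * (N - 1))
      atTop (𝓝 (ρ / 2 * N * (N - 1))) := by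
    have h_sum : ∀ β : ℝ, ∑ d ∈ Finset.range (N + 1),
        (N.choose d : ℝ) * exp (β * A d) * (β * A d) =
        ∑ d ∈ Finset.Icc 1 N, (N.choose d : ℝ) * exp (β * A d) * (β * A d) :=
      fun β => Finset.sum_range_succ_eq_sum_Icc_one _ (by simp [hA]) N
    simpa only [h_sum, zero_add] using h_tail.add_const (ρ / 2 * N * (N - 1))
  have h_const : 0 < ρ / 2 * N * (N - 1) := mul_pos (by positivity) (by linarith)
  exact eventually_atTop.mp (h_F.eventually (eventually_gt_nhds h_const))
end
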